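/- arXiv:1403.2566 — 2 statements merged into one kernel-verified Lean document; each statement's English description precedes it below -/
import Mathlib

section
/- Let k ∈ ℤ \ {0}, R > 0, s₊ > 0 and define the reduced Dirichlet energy E₀(u,v) = ∫₀^R (1/2)( u'(r)² + v'(r)² + (k²/r²) u(r)² ) r dr. For the explicit profiles u₋, v₋ (with u₋(r) = 2√2 s₊ R^{|k|} r^{|k|}/(r^{2|k|}+3R^{2|k|}), v₋(r) = √(2/3) s₊ (r^{2|k|}−3R^{2|k|})/(r^{2|k|}+3R^{2|k|})), one has 2π E₀(u₋, v₋) = (2/3) |k| π s₊². -/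
/-!
Write `u₋ = 2√2 s · a` and `v₋ = √(2/3) s · b` with `a = uProfile n R`, `b = vProfile n R`, `n = |k|`.
The normalised profiles satisfy
`12 a² + b² = 1`, so `(2√3 a, b) = (sin θ, -cos θ)` for an angle `θ(r)`, and `θ` solves the first-order
(Bogomolny) equation `r θ' = n sin θ`, i.e. `r a' = -n a b` and `r b' = 12 n a²`. On such a profile the
energy density is the exact derivative `n (2/3) s² b'`, hence `E₀ = n (2/3) s² (b(R) - b(0)) = n s² / 3`.
-/

noncomputable section

/-- u₋ profile -/
def uminus (k : ℤ) (R s : ℝ) (r : ℝ) : ℝ :=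
  2 * Real.sqrt 2 * s * (R ^ k.natAbs * r ^ k.natAbs) / (r ^ (2 * k.natAbs) + 3 * R ^ (2 * k.natAbs))

/-- v₋ profile -/
def vminus (k : ℤ) (R s : ℝ) (r : ℝ) : ℝ :=
  Real.sqrt (2 / 3) * s * (r ^ (2 * k.natAbs) - 3 * R ^ (2 * k.natAbs)) / (r ^ (2 * k.natAbs) + 3 * R ^ (2 * k.natAbs))

/-- reduced Dirichlet energy E₀(u,v) -/
def E0 (k : ℤ) (R : ℝ) (u v : ℝ → ℝ) : ℝ :=
  ∫ r in (0 : ℝ)..R,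
    (1 / 2) * ((deriv u r) ^ 2 + (deriv v r) ^ 2 + ((k : ℝ) ^ 2 / r ^ 2) * (u r) ^ 2) * r

open Real

def uProfile (n : ℕ) (R r : ℝ) : ℝ := R ^ n * r ^ n / (r ^ (2 * n) + 3 * R ^ (2 * n))

def vProfile (n : ℕ) (R r : ℝ) : ℝ := (r ^ (2 * n) - 3 * R ^ (2 * n)) / (r ^ (2 * n) + 3 * R ^ (2 * n))

section Profiles

variable {n : ℕ} {R : ℝ}

lemma profile_denom_pos (hR : 0 < R) (r : ℝ) : 0 < r ^ (2 * n) + 3 * R ^ (2 * n) := by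
  have := (even_two_mul n).pow_nonneg r
  have := pow_pos hR (2 * n)
  linarith

lemma contDiff_uProfile (hR : 0 < R) {m : WithTop ℕ∞} : ContDiff ℝ m (uProfile n R) :=
  ContDiff.div (by fun_prop) (by fun_prop) fun r => (profile_denom_pos hR r).ne'

lemma contDiff_vProfile (hR : 0 < R) {m : WithTop ℕ∞} : ContDiff ℝ m (vProfile n R) :=
  ContDiff.div (by fun_prop) (by fun_prop) fun r => (profile_denom_pos hR r).ne'

lemma twelve_mul_uProfile_sq_add_vProfile_sq (hR : 0 < R) (r : ℝ) :
    12 * uProfile n R r ^ 2 + vProfile n R r ^ 2 = 1 := by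
  have := (profile_denom_pos (n := n) hR r).ne'
  rw [uProfile, vProfile]
  field_simp
  ring

lemma mul_deriv_uProfile (hn : n ≠ 0) (hR : 0 < R) (r : ℝ) :
    r * deriv (uProfile n R) r = -n * uProfile n R r * vProfile n R r := by
  have hD := (profile_denom_pos (n := n) hR r).ne'
  have h : HasDerivAt (uProfile n R) _ r := (((hasDerivAt_pow n r).const_mul (R ^ n)).div
    ((hasDerivAt_pow (2 * n) r).add_const (3 * R ^ (2 * n))) hD)
  rw [h.deriv, uProfile, vProfile]
  field_simp
  push_cast
  linear_combination (n * (r ^ (2 * n) + 3 * R ^ (2 * n))) * mul_pow_sub_one hn r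
    - (2 * n * r ^ n) * mul_pow_sub_one (by omega : 2 * n ≠ 0) r

lemma mul_deriv_vProfile (hn : n ≠ 0) (hR : 0 < R) (r : ℝ) :
    r * deriv (vProfile n R) r = 12 * n * uProfile n R r ^ 2 := by
  have hD := (profile_denom_pos (n := n) hR r).ne'
  have h : HasDerivAt (vProfile n R) _ r := (((hasDerivAt_pow (2 * n) r).sub_const (3 * R ^ (2 * n))).div
    ((hasDerivAt_pow (2 * n) r).add_const (3 * R ^ (2 * n))) hD)
  rw [h.deriv, uProfile]
  field_simp
  push_cast
  linear_combination (12 * n * R ^ (2 * n)) * mul_pow_sub_one (by omega : 2 * n ≠ 0) r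

lemma vProfile_zero (hn : n ≠ 0) (hR : 0 < R) : vProfile n R 0 = -1 := by
  have := (pow_pos hR (2 * n)).ne'
  rw [vProfile, zero_pow (by omega)]
  field_simp
  ring

lemma vProfile_self (hR : 0 < R) : vProfile n R R = -1 / 2 := by
  have := (pow_pos hR (2 * n)).ne'
  rw [vProfile]
  field_simp
  ring

lemma integral_deriv_vProfile (hn : n ≠ 0) (hR : 0 < R) :
    ∫ r in (0 : ℝ)..R, deriv (vProfile n R) r = 1 / 2 := by
  have hv : ContDiff ℝ 1 (vProfile n R) := contDiff_vProfile hR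
  rw [intervalIntegral.integral_deriv_eq_sub (fun r _ => hv.differentiable one_ne_zero r)
    ((hv.continuous_deriv le_rfl).intervalIntegrable _ _), vProfile_self hR, vProfile_zero hn hR]
  norm_num

end Profiles

lemma uminus_eq (k : ℤ) (R s : ℝ) :
    uminus k R s = fun r => 2 * √2 * s * uProfile k.natAbs R r := by
  funext r
  rw [uminus, uProfile, mul_div_assoc]

lemma vminus_eq (k : ℤ) (R s : ℝ) :
    vminus k R s = fun r => √(2 / 3) * s * vProfile k.natAbs R r := by
  funext r
  rw [vminus, vProfile, mul_div_assoc]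

lemma energy_density_eq {k : ℤ} (hk : k ≠ 0) {R : ℝ} (hR : 0 < R) (s : ℝ) {r : ℝ} (hr : r ≠ 0) :
    (1 / 2) * ((deriv (uminus k R s) r) ^ 2 + (deriv (vminus k R s) r) ^ 2
      + ((k : ℝ) ^ 2 / r ^ 2) * (uminus k R s r) ^ 2) * r
      = k.natAbs * (√(2 / 3) * s) ^ 2 * deriv (vProfile k.natAbs R) r := by
  have hn : k.natAbs ≠ 0 := Int.natAbs_ne_zero.mpr hk
  have hk2 : (k : ℝ) ^ 2 = (k.natAbs : ℝ) ^ 2 := by rw [Nat.cast_natAbs, Int.cast_abs, sq_abs]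
  rw [uminus_eq, vminus_eq, deriv_const_mul _ ((contDiff_uProfile hR).differentiable one_ne_zero r),
    deriv_const_mul _ ((contDiff_vProfile hR).differentiable one_ne_zero r), hk2]
  have hsum := twelve_mul_uProfile_sq_add_vProfile_sq (n := k.natAbs) hR r
  rw [eq_div_of_mul_eq hr ((mul_comm _ _).trans (mul_deriv_uProfile hn hR r)),
    eq_div_of_mul_eq hr ((mul_comm _ _).trans (mul_deriv_vProfile hn hR r))]
  simp only [mul_pow, Real.sq_sqrt (by norm_num : (0:ℝ) ≤ 2), Real.sq_sqrt (by norm_num : (0:ℝ) ≤ 2 / 3)]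
  field_simp
  linear_combination 12 * s ^ 2 * uProfile k.natAbs R r ^ 2 * hsum

theorem energy_of_Yminus_general (k : ℤ) (hk : k ≠ 0) (R s : ℝ) (hR : 0 < R) :
    2 * Real.pi * E0 k R (uminus k R s) (vminus k R s)
      = (2 / 3) * (k.natAbs : ℝ) * Real.pi * s ^ 2 := by
  have hE : E0 k R (uminus k R s) (vminus k R s)
      = k.natAbs * (√(2 / 3) * s) ^ 2 * ∫ r in (0 : ℝ)..R, deriv (vProfile k.natAbs R) r := by
    rw [E0, ← intervalIntegral.integral_const_mul]
    refine intervalIntegral.integral_congr_ae (.of_forall fun r hr => ?_)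
    rw [Set.uIoc_of_le hR.le] at hr
    exact energy_density_eq hk hR s hr.1.ne'
  rw [hE, integral_deriv_vProfile (Int.natAbs_ne_zero.mpr hk) hR, mul_pow, Real.sq_sqrt (by norm_num)]
  ring

theorem energy_of_Yminus (k : ℤ) (hk : k ≠ 0) (R s : ℝ) (hR : 0 < R) (hs : 0 < s) :
    2 * Real.pi * E0 k R (uminus k R s) (vminus k R s)
      = (2 / 3) * (k.natAbs : ℝ) * Real.pi * s ^ 2 :=
  energy_of_Yminus_general k hk R s hR
end
end

section
/- Let k ∈ ℤ \ {0}, R > 0, s₊ > 0 and E₀(u,v) = ∫₀^R (1/2)( u'² + v'² + (k²/r²) u² ) r dr. For the profiles u₊(r) = 2√2 s₊ R^{|k|} r^{|k|}/(3r^{2|k|}+R^{2|k|}), v₊(r) = √(2/3) s₊ (R^{2|k|}−3r^{2|k|})/(3r^{2|k|}+R^{2|k|}), one has 2π E₀(u₊, v₊) = 2 |k| π s₊². In particular E₀(u₋,v₋) < E₀(u₊,v₊) where (u₋,v₋) are as in the companion statement. -/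
noncomputable section

/-- u₊ profile -/
def uplus (k : ℤ) (R s : ℝ) (r : ℝ) : ℝ :=
  2 * Real.sqrt 2 * s * (R ^ k.natAbs * r ^ k.natAbs) / (3 * r ^ (2 * k.natAbs) + R ^ (2 * k.natAbs))

/-- v₊ profile -/
def vplus (k : ℤ) (R s : ℝ) (r : ℝ) : ℝ :=
  Real.sqrt (2 / 3) * s * (R ^ (2 * k.natAbs) - 3 * r ^ (2 * k.natAbs)) / (3 * r ^ (2 * k.natAbs) + R ^ (2 * k.natAbs))

/-!
Both pairs `(u₊, v₊)` and `(u₋, v₋)` have the shape `u = c rⁿ / D`, `v = d (α r²ⁿ - β) / D` with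
`D = α r²ⁿ + β` and `n = |k|`, and satisfy `c² = 4αβd²`. Under that relation the energy density
collapses to `(1/2)(u'² + v'² + n² u²/r²) r = n² c² r²ⁿ⁻¹ / D²`, which is the derivative of
`n c² r²ⁿ / (2β D)`. Hence `E₀ = n c² R²ⁿ / (2β(α R²ⁿ + β))`, which is `n s²` for `(u₊, v₊)` and
`n s² / 3` for `(u₋, v₋)`.
-/

def bubbleU (n : ℕ) (α β c : ℝ) (r : ℝ) : ℝ := c * r ^ n / (α * r ^ (2 * n) + β)

def bubbleV (n : ℕ) (α β d : ℝ) (r : ℝ) : ℝ := d * (α * r ^ (2 * n) - β) / (α * r ^ (2 * n) + β)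

section Bubble

-- The exponent is written `m + 1` so that derivatives of powers involve no truncated `n - 1`.
variable {α β : ℝ} (m : ℕ) (x : ℝ)

lemma bubble_den_pos (hα : 0 ≤ α) (hβ : 0 < β) (n : ℕ) : 0 < α * x ^ (2 * n) + β := by
  have := (even_two_mul n).pow_nonneg x
  positivity

variable (hD : α * x ^ (2 * (m + 1)) + β ≠ 0)
include hD

lemma hasDerivAt_bubbleU (c : ℝ) :
    HasDerivAt (bubbleU (m + 1) α β c)
      ((m + 1) * c * x ^ m * (β - α * x ^ (2 * (m + 1))) / (α * x ^ (2 * (m + 1)) + β) ^ 2) x := by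
  have hden := ((hasDerivAt_pow (2 * (m + 1)) x).const_mul α).add_const β
  refine (((hasDerivAt_pow (m + 1) x).const_mul c).div hden hD).congr_deriv ?_
  rw [Nat.add_sub_cancel, show 2 * (m + 1) - 1 = 2 * m + 1 by omega]
  push_cast
  ring

lemma hasDerivAt_bubbleV (d : ℝ) :
    HasDerivAt (bubbleV (m + 1) α β d)
      (4 * (m + 1) * α * β * d * x ^ (2 * m + 1) / (α * x ^ (2 * (m + 1)) + β) ^ 2) x := by
  have hden := ((hasDerivAt_pow (2 * (m + 1)) x).const_mul α).add_const β
  refine ((((hasDerivAt_pow (2 * (m + 1)) x).const_mul α).sub_const β |>.const_mul d).div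
    hden hD).congr_deriv ?_
  rw [show 2 * (m + 1) - 1 = 2 * m + 1 by omega]
  push_cast
  ring

lemma bubble_energy_density {c d : ℝ} (hcd : c ^ 2 = 4 * α * β * d ^ 2) :
    1 / 2 * (deriv (bubbleU (m + 1) α β c) x ^ 2 + deriv (bubbleV (m + 1) α β d) x ^ 2
        + ((m + 1) ^ 2 / x ^ 2) * bubbleU (m + 1) α β c x ^ 2) * x
      = (m + 1) ^ 2 * c ^ 2 * x ^ (2 * m + 1) / (α * x ^ (2 * (m + 1)) + β) ^ 2 := by
  rcases eq_or_ne x 0 with rfl | hx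
  · simp
  rw [(hasDerivAt_bubbleU m x hD c).deriv, (hasDerivAt_bubbleV m x hD d).deriv, bubbleU]
  field_simp
  ring_nf
  rw [hcd]
  ring

lemma hasDerivAt_bubble_energy_primitive (hβ : β ≠ 0) (c : ℝ) :
    HasDerivAt
      (fun y => (m + 1) * c ^ 2 * y ^ (2 * (m + 1)) / (2 * β * (α * y ^ (2 * (m + 1)) + β)))
      ((m + 1) ^ 2 * c ^ 2 * x ^ (2 * m + 1) / (α * x ^ (2 * (m + 1)) + β) ^ 2) x := by
  have hpow := hasDerivAt_pow (2 * (m + 1)) x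
  refine ((hpow.const_mul ((m + 1) * c ^ 2)).div
    ((hpow.const_mul α).add_const β |>.const_mul (2 * β))
    (mul_ne_zero (mul_ne_zero two_ne_zero hβ) hD)).congr_deriv ?_
  rw [show 2 * (m + 1) - 1 = 2 * m + 1 by omega]
  push_cast
  field_simp
  ring

end Bubble

lemma E0_bubble {k : ℤ} (hk : k ≠ 0) (R : ℝ) {α β c d : ℝ} (hα : 0 ≤ α) (hβ : 0 < β)
    (hcd : c ^ 2 = 4 * α * β * d ^ 2) :
    E0 k R (bubbleU k.natAbs α β c) (bubbleV k.natAbs α β d)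
      = k.natAbs * c ^ 2 * R ^ (2 * k.natAbs) / (2 * β * (α * R ^ (2 * k.natAbs) + β)) := by
  obtain ⟨m, hm⟩ : ∃ m : ℕ, k.natAbs = m + 1 :=
    Nat.exists_eq_succ_of_ne_zero (Int.natAbs_ne_zero.mpr hk)
  have hk2 : (k : ℝ) ^ 2 = (m + 1) ^ 2 := by exact_mod_cast hm ▸ (Int.natAbs_sq k).symm
  have hD : ∀ x : ℝ, α * x ^ (2 * (m + 1)) + β ≠ 0 := fun x => (bubble_den_pos x hα hβ _).ne'
  rw [E0, hk2, hm, intervalIntegral.integral_congr fun x _ => bubble_energy_density m x (hD x) hcd,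
    intervalIntegral.integral_eq_sub_of_hasDerivAt
      (fun x _ => hasDerivAt_bubble_energy_primitive m x (hD x) hβ.ne' c)]
  · simp
  · exact (continuous_const.mul (continuous_pow _)).div (by fun_prop)
      (fun x => pow_ne_zero _ (hD x)) |>.intervalIntegrable _ _

section Profiles

variable (k : ℤ) (R s : ℝ)

lemma uplus_eq_bubbleU :
    uplus k R s = bubbleU k.natAbs 3 (R ^ (2 * k.natAbs)) (2 * √2 * s * R ^ k.natAbs) := by
  funext r; simp only [uplus, bubbleU]; ring

lemma vplus_eq_bubbleV :
    vplus k R s = bubbleV k.natAbs 3 (R ^ (2 * k.natAbs)) (-(√(2 / 3) * s)) := by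
  funext r; simp only [vplus, bubbleV]; ring

lemma uminus_eq_bubbleU :
    uminus k R s = bubbleU k.natAbs 1 (3 * R ^ (2 * k.natAbs)) (2 * √2 * s * R ^ k.natAbs) := by
  funext r; simp only [uminus, bubbleU]; ring

lemma vminus_eq_bubbleV :
    vminus k R s = bubbleV k.natAbs 1 (3 * R ^ (2 * k.natAbs)) (√(2 / 3) * s) := by
  funext r; simp only [vminus, bubbleV]; ring

variable {k R}

lemma E0_plus (hk : k ≠ 0) (hR : R ≠ 0) :
    E0 k R (uplus k R s) (vplus k R s) = k.natAbs * s ^ 2 := by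
  have hRn : 0 < R ^ (2 * k.natAbs) := (even_two_mul _).pow_pos hR
  rw [uplus_eq_bubbleU, vplus_eq_bubbleV, E0_bubble hk R (by norm_num) hRn]
  all_goals simp only [mul_pow, neg_sq, Real.sq_sqrt (show (0 : ℝ) ≤ 2 by norm_num),
    Real.sq_sqrt (show (0 : ℝ) ≤ 2 / 3 by norm_num), ← pow_mul]
  · field_simp; ring
  · ring

lemma E0_minus (hk : k ≠ 0) (hR : R ≠ 0) :
    E0 k R (uminus k R s) (vminus k R s) = k.natAbs * s ^ 2 / 3 := by
  have hRn : 0 < 3 * R ^ (2 * k.natAbs) :=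
    mul_pos three_pos ((even_two_mul _).pow_pos hR)
  rw [uminus_eq_bubbleU, vminus_eq_bubbleV, E0_bubble hk R zero_le_one hRn]
  all_goals simp only [mul_pow, Real.sq_sqrt (show (0 : ℝ) ≤ 2 by norm_num),
    Real.sq_sqrt (show (0 : ℝ) ≤ 2 / 3 by norm_num), ← pow_mul]
  · field_simp; ring
  · ring

end Profiles

theorem energy_of_Yplus (k : ℤ) (hk : k ≠ 0) (R s : ℝ) (hR : 0 < R) (hs : 0 < s) :
    2 * Real.pi * E0 k R (uplus k R s) (vplus k R s) = 2 * (k.natAbs : ℝ) * Real.pi * s ^ 2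
    ∧ E0 k R (uminus k R s) (vminus k R s) < E0 k R (uplus k R s) (vplus k R s) := by
  rw [E0_plus s hk hR.ne', E0_minus s hk hR.ne']
  have : 0 < (k.natAbs : ℝ) * s ^ 2 := by positivity
  constructor
  · ring
  · linarith
end
end
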